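/- arXiv:0906.2017 — 2 statements merged into one kernel-verified Lean document; each statement's English description precedes it below -/
import Mathlib

section
/- Let (A, φ, φ') be an infinitesimal noncommutative probability space with free cumulant functionals (κ_n)_{n≥1} and infinitesimal free cumulant functionals (κ'_n)_{n≥1}. Let φ̃ := φ + εφ' : A → G, and let (κ̃_n)_{n≥1} be the G-valued cumulant functionals of (A, φ̃). Then for every n ≥ 1 and all a_1, ..., a_n ∈ A one has Bo(κ̃_n(a_1, ..., a_n)) = κ_n(a_1, ..., a_n) and So(κ̃_n(a_1, ..., a_n)) = κ'_n(a_1, ..., a_n). -/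
/-!
The moment–cumulant formulas determine the cumulants recursively: the one-block partition
contributes `κ_n(a_1, …, a_n)`, while every other non-crossing partition only involves cumulants
of lower order. Hence it suffices to check that the dual-number family `κ_n + ε κ'_n` satisfies
the moment–cumulant formulas of `φ + ε φ'`. Its body does so by those of `φ`, and, since the soul
of a product of dual numbers obeys the Leibniz rule, its soul does so by those of `φ'`.
-/

namespace InfFree

open scoped BigOperators

/-- `π` is a partition of `Fin n` into nonempty blocks. -/
def IsPartition {n : ℕ} (π : Finset (Finset (Fin n))) : Prop :=
  (∀ V ∈ π, V.Nonempty) ∧ ∀ i : Fin n, ∃! V : Finset (Fin n), V ∈ π ∧ i ∈ V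

/-- `π` is non-crossing: there are no `p < q < r < s` with `p, r` in one block and
`q, s` in another block. -/
def IsNonCrossing {n : ℕ} (π : Finset (Finset (Fin n))) : Prop :=
  ∀ p q r s : Fin n, p < q → q < r → r < s →
    ∀ V ∈ π, ∀ W ∈ π, p ∈ V → r ∈ V → q ∈ W → s ∈ W → V = W

open Classical in
/-- The finset `NC n` of non-crossing partitions of `Fin n`. -/
noncomputable def NC (n : ℕ) : Finset (Finset (Finset (Fin n))) :=
  Finset.univ.filter fun π => IsPartition π ∧ IsNonCrossing π

/-- Restriction of an `n`-tuple to a subset `V ⊆ Fin n`, listed in increasing order. -/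
def restrict {α : Type*} {n : ℕ} (a : Fin n → α) (V : Finset (Fin n)) :
    Fin V.card → α :=
  fun i => a (V.orderIsoOfFin rfl i).1

/-- `κ` is the family of `R`-valued non-crossing cumulant functionals of `φ`, i.e.
the moment-cumulant formulas hold. -/
def MomentCumulant {A : Type*} [Ring A] {R : Type*} [CommRing R]
    (φ : A → R) (κ : ∀ n : ℕ, (Fin n → A) → R) : Prop :=
  ∀ (n : ℕ), 1 ≤ n → ∀ a : Fin n → A,
    φ (List.ofFn a).prod = ∑ π ∈ NC n, ∏ V ∈ π, κ V.card (restrict a V)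

/-- `κ'` is the family of infinitesimal non-crossing cumulant functionals of
`(φ, φ')`, where `κ` is the family of non-crossing cumulant functionals of `φ`. -/
def InfMomentCumulant {A : Type*} [Ring A]
    (φ' : A → ℂ) (κ κ' : ∀ n : ℕ, (Fin n → A) → ℂ) : Prop :=
  ∀ (n : ℕ), 1 ≤ n → ∀ a : Fin n → A,
    φ' (List.ofFn a).prod =
      ∑ π ∈ NC n, ∑ V ∈ π,
        κ' V.card (restrict a V) * ∏ W ∈ π.erase V, κ W.card (restrict a W)

/-- Consecutive indices are distinct. -/
def Alternating {n k : ℕ} (i : Fin n → Fin k) : Prop :=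
  ∀ (m : ℕ) (h : m + 1 < n), i ⟨m, Nat.lt_of_succ_lt h⟩ ≠ i ⟨m + 1, h⟩

/-- Freeness of the family of subsets `S` with respect to `φ`. -/
def FreeSets {A : Type*} [Ring A] {k : ℕ} (φ : A → ℂ) (S : Fin k → Set A) : Prop :=
  ∀ (n : ℕ), 1 ≤ n → ∀ i : Fin n → Fin k, Alternating i →
    ∀ a : Fin n → A, (∀ m, a m ∈ S (i m)) → (∀ m, φ (a m) = 0) →
      φ (List.ofFn a).prod = 0

/-- Infinitesimal freeness of the family of subsets `S` with respect to `(φ, φ')`. -/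
def InfFreeSets {A : Type*} [Ring A] {k : ℕ} (φ φ' : A → ℂ) (S : Fin k → Set A) : Prop :=
  ∀ (n : ℕ) (hn : 1 ≤ n) (i : Fin n → Fin k), Alternating i →
    ∀ a : Fin n → A, (∀ m, a m ∈ S (i m)) → (∀ m, φ (a m) = 0) →
      φ (List.ofFn a).prod = 0 ∧
      ((Odd n ∧ ∀ m : Fin n, i m = i m.rev) →
        φ' (List.ofFn a).prod =
          (∏ j : Fin ((n - 1) / 2),
              φ (a ⟨j, by have := j.isLt; omega⟩ *
                 a ⟨n - 1 - j, by have := j.isLt; omega⟩)) *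
            φ' (a ⟨n / 2, by omega⟩)) ∧
      (¬(Odd n ∧ ∀ m : Fin n, i m = i m.rev) → φ' (List.ofFn a).prod = 0)

open Finset TrivSqZeroExt

section Partitions

variable {n : ℕ}

lemma isPartition_of_mem_NC {π : Finset (Finset (Fin n))} (hπ : π ∈ NC n) : IsPartition π := by
  classical
  exact (mem_filter.mp hπ).2.1

lemma singleton_univ_mem_NC (hn : 1 ≤ n) : ({univ} : Finset (Finset (Fin n))) ∈ NC n := by
  have : Nonempty (Fin n) := ⟨⟨0, hn⟩⟩
  classical
  refine mem_filter.mpr ⟨mem_univ _, ⟨?_, fun i => ?_⟩, ?_⟩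
  · rintro V hV
    rw [mem_singleton.mp hV]
    exact univ_nonempty
  · exact ⟨univ, ⟨mem_singleton_self _, mem_univ i⟩, fun V hV => mem_singleton.mp hV.1⟩
  · intro p q r s _ _ _ V hV W hW _ _ _ _
    rw [mem_singleton.mp hV, mem_singleton.mp hW]

lemma IsPartition.card_pos {π : Finset (Finset (Fin n))} (hπ : IsPartition π)
    {V : Finset (Fin n)} (hV : V ∈ π) : 0 < V.card :=
  Finset.card_pos.mpr (hπ.1 V hV)

lemma IsPartition.card_lt {π : Finset (Finset (Fin n))} (hπ : IsPartition π)
    (hne : π ≠ {univ}) {V : Finset (Fin n)} (hV : V ∈ π) : V.card < n := by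
  refine lt_of_le_of_ne (card_le_univ V |>.trans_eq (Fintype.card_fin n)) fun hcard => hne ?_
  have hVuniv : V = univ := eq_univ_of_card V (hcard.trans (Fintype.card_fin n).symm)
  refine eq_singleton_iff_unique_mem.mpr ⟨hVuniv ▸ hV, fun W hW => ?_⟩
  obtain ⟨i, hi⟩ := hπ.1 W hW
  obtain ⟨U, -, hU⟩ := hπ.2 i
  rw [hU W ⟨hW, hi⟩, ← hU V ⟨hV, hVuniv ▸ mem_univ i⟩, hVuniv]

end Partitions

lemma restrict_univ {α : Type*} {n : ℕ} (a : Fin n → α) :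
    restrict a univ = a ∘ Fin.cast (card_fin n) := by
  have hcast : (Fin.cast (card_fin n) : Fin (univ : Finset (Fin n)).card → Fin n)
      = univ.orderEmbOfFin rfl :=
    orderEmbOfFin_unique _ (fun _ => mem_univ _) fun _ _ h => h
  funext i
  exact congrArg a (congrFun hcast i).symm

lemma apply_card_univ_restrict_univ {α β : Type*} {n : ℕ} (F : ∀ k : ℕ, (Fin k → α) → β)
    (a : Fin n → α) : F (univ : Finset (Fin n)).card (restrict a univ) = F n a := by
  rw [restrict_univ]
  generalize_proofs h
  generalize (univ : Finset (Fin n)).card = k at h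
  subst h
  rfl

theorem MomentCumulant.unique {A R : Type*} [Ring A] [CommRing R] {φ : A → R}
    {κ₁ κ₂ : ∀ n : ℕ, (Fin n → A) → R} (h₁ : MomentCumulant φ κ₁) (h₂ : MomentCumulant φ κ₂)
    (n : ℕ) (hn : 1 ≤ n) (a : Fin n → A) : κ₁ n a = κ₂ n a := by
  induction n using Nat.strong_induction_on with
  | _ n ih =>
  have hmoments := (h₁ n hn a).symm.trans (h₂ n hn a)
  have hone := singleton_univ_mem_NC hn
  rw [← add_sum_erase _ _ hone, ← add_sum_erase _ _ hone, prod_singleton, prod_singleton,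
    apply_card_univ_restrict_univ κ₁, apply_card_univ_restrict_univ κ₂] at hmoments
  refine add_right_cancel (hmoments.trans (congrArg _ (sum_congr rfl fun π hπ => ?_)))
  have hπ_part := isPartition_of_mem_NC (mem_of_mem_erase hπ)
  exact prod_congr rfl fun V hV =>
    (ih _ (hπ_part.card_lt (ne_of_mem_erase hπ) hV) (hπ_part.card_pos hV) _).symm

lemma fst_prod {R M ι : Type*} [CommSemiring R] [AddCommMonoid M] [Module R M] [Module Rᵐᵒᵖ M]
    [IsCentralScalar R M] (s : Finset ι) (f : ι → TrivSqZeroExt R M) :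
    (∏ i ∈ s, f i).fst = ∏ i ∈ s, (f i).fst :=
  map_prod (fstHom R R M) f s

lemma snd_prod {R M ι : Type*} [CommSemiring R] [AddCommMonoid M] [Module R M] [Module Rᵐᵒᵖ M]
    [IsCentralScalar R M] [DecidableEq ι] (s : Finset ι) (f : ι → TrivSqZeroExt R M) :
    (∏ i ∈ s, f i).snd = ∑ i ∈ s, (∏ j ∈ s.erase i, (f j).fst) • (f i).snd := by
  induction s using Finset.induction_on with
  | empty => simp
  | insert b s hb ih =>
    rw [prod_insert hb, snd_mul, sum_insert hb, erase_insert hb, ih, fst_prod, op_smul_eq_smul,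
      smul_sum, add_comm]
    congr 1
    refine sum_congr rfl fun i hi => ?_
    rw [erase_insert_of_ne (ne_of_mem_of_not_mem hi hb).symm,
      prod_insert fun h => hb (mem_of_mem_erase h), mul_smul]

theorem momentCumulant_dualNumber {A : Type*} [Ring A] {φ φ' : A → ℂ}
    {κ κ' : ∀ n : ℕ, (Fin n → A) → ℂ} (hκ : MomentCumulant φ κ)
    (hκ' : InfMomentCumulant φ' κ κ') :
    MomentCumulant (fun x => (inl (φ x) + inr (φ' x) : DualNumber ℂ))
      (fun n a => inl (κ n a) + inr (κ' n a)) := by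
  intro n hn a
  ext
  · simp only [fst_add, fst_inl, fst_inr, add_zero, fst_sum, fst_prod]
    exact hκ n hn a
  · simp only [snd_add, snd_inl, snd_inr, zero_add, snd_sum]
    rw [hκ' n hn a]
    refine sum_congr rfl fun π _ => ?_
    rw [snd_prod]
    simp [mul_comm]

theorem grassmann_cumulant_body_soul_general
    {A : Type*} [Ring A] [Algebra ℂ A]
    (φ φ' : A →ₗ[ℂ] ℂ)
    (κ κ' : ∀ n : ℕ, (Fin n → A) → ℂ)
    (hκ : MomentCumulant (⇑φ) κ) (hκ' : InfMomentCumulant (⇑φ') κ κ')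
    (κg : ∀ n : ℕ, (Fin n → A) → DualNumber ℂ)
    (hκg : MomentCumulant
      (fun a : A => (TrivSqZeroExt.inl (φ a) + TrivSqZeroExt.inr (φ' a) : DualNumber ℂ))
      κg) :
    ∀ (n : ℕ), 1 ≤ n → ∀ a : Fin n → A,
      TrivSqZeroExt.fst (κg n a) = κ n a ∧
      TrivSqZeroExt.snd (κg n a) = κ' n a := by
  intro n hn a
  rw [hκg.unique (momentCumulant_dualNumber hκ hκ') n hn a]
  simp

/-- For `φ̃ = φ + ε φ' : A → G`, the body of the G-valued cumulant
`κ̃_n` is `κ_n` and its soul is `κ'_n`. -/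
theorem grassmann_cumulant_body_soul
    {A : Type*} [Ring A] [Algebra ℂ A]
    (φ φ' : A →ₗ[ℂ] ℂ) (hφ1 : φ 1 = 1) (hφ'1 : φ' 1 = 0)
    (κ κ' : ∀ n : ℕ, (Fin n → A) → ℂ)
    (hκ : MomentCumulant (⇑φ) κ) (hκ' : InfMomentCumulant (⇑φ') κ κ')
    (κg : ∀ n : ℕ, (Fin n → A) → DualNumber ℂ)
    (hκg : MomentCumulant
      (fun a : A => (TrivSqZeroExt.inl (φ a) + TrivSqZeroExt.inr (φ' a) : DualNumber ℂ))
      κg) :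
    ∀ (n : ℕ), 1 ≤ n → ∀ a : Fin n → A,
      TrivSqZeroExt.fst (κg n a) = κ n a ∧
      TrivSqZeroExt.snd (κg n a) = κ' n a :=
  grassmann_cumulant_body_soul_general φ φ' κ κ' hκ hκ' κg hκg

end InfFree
end

section
/- Let (A, φ, φ') be an infinitesimal noncommutative probability space and let A_1, ..., A_k be unital subalgebras of A that are infinitesimally free in (A, φ, φ'). Suppose that for every 1 ≤ i ≤ k the restrictions φ|A_i and φ'|A_i are traces, i.e., φ(ab) = φ(ba) and φ'(ab) = φ'(ba) for all a, b ∈ A_i. Then φ and φ' are traces on the unital subalgebra of A generated by A_1 ∪ ⋯ ∪ A_k: for all x, y in that subalgebra, φ(xy) = φ(yx) and φ'(xy) = φ'(yx). -/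
namespace InfFree

open scoped BigOperators

/-!
The algebra generated by the `A_i` is spanned by products `a₁ ⋯ aₙ` of centered letters taken
alternately from different `A_i`; by linearity and by rotating one letter at a time, it suffices
to show `ψ (x a₁ ⋯ aₙ) = ψ (a₁ ⋯ aₙ x)` for `ψ ∈ {φ, φ'}` and a centered letter `x ∈ A_i`.
When `x` lies in the same algebra as `a₁` (or `aₙ`), merge it into that letter and re-center.
All words that arise are again centered and alternating, so freeness evaluates both sides:
`φ` vanishes on them, and `φ'` vanishes unless their indices form an odd palindrome, in which
case it peels off as `φ (a₁ aₙ) φ' (a₂ ⋯ aₙ₋₁)`. The two sides then agree by the traciality of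
`φ` and `φ'` on the single algebra `A_i`.
-/

section Alternating

variable {A : Type*} {k : ℕ}

/-- A word `a₁ ⋯ aₙ` with `aⱼ ∈ S iⱼ` is encoded as the list of pairs `(aⱼ, iⱼ)`. -/
def IsCenteredAlternating (φ : A → ℂ) (S : Fin k → Set A) (w : List (A × Fin k)) : Prop :=
  (∀ p ∈ w, p.1 ∈ S p.2 ∧ φ p.1 = 0) ∧ (w.map Prod.snd).IsChain (· ≠ ·)

def IsOddPalindrome {ι : Type*} (l : List ι) : Prop :=
  Odd l.length ∧ l.reverse = l

lemma isOddPalindrome_cons_append_iff {ι : Type*} {a b : ι} {l : List ι} :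
    IsOddPalindrome (a :: (l ++ [b])) ↔ b = a ∧ IsOddPalindrome l := by
  have hrev : (a :: (l ++ [b])).reverse = b :: (l.reverse ++ [a]) := by simp
  simp only [IsOddPalindrome, hrev, List.cons_eq_cons]
  constructor
  · rintro ⟨hodd, rfl, hl⟩
    exact ⟨rfl, by simpa [Nat.odd_add_one] using hodd, (List.append_left_inj _).mp hl⟩
  · rintro ⟨rfl, hodd, hl⟩
    exact ⟨by simpa [Nat.odd_add_one] using hodd, rfl, by rw [hl]⟩

variable {φ : A → ℂ} {S : Fin k → Set A}

lemma isCenteredAlternating_cons_iff {p : A × Fin k} {w : List (A × Fin k)} :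
    IsCenteredAlternating φ S (p :: w) ↔
      (p.1 ∈ S p.2 ∧ φ p.1 = 0) ∧ (∀ q ∈ w.head?, p.2 ≠ q.2) ∧ IsCenteredAlternating φ S w := by
  simp only [IsCenteredAlternating, List.forall_mem_cons, List.map_cons, List.isChain_cons,
    List.head?_map, Option.mem_def, Option.map_eq_some_iff]
  grind

lemma isCenteredAlternating_append_singleton_iff {p : A × Fin k} {w : List (A × Fin k)} :
    IsCenteredAlternating φ S (w ++ [p]) ↔
      IsCenteredAlternating φ S w ∧ (∀ q ∈ w.getLast?, q.2 ≠ p.2) ∧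
        (p.1 ∈ S p.2 ∧ φ p.1 = 0) := by
  simp only [IsCenteredAlternating, List.mem_append, List.mem_singleton, List.map_append,
    List.map_cons, List.map_nil, List.isChain_append, List.getLast?_map, List.head?_cons,
    Option.mem_def, Option.map_eq_some_iff, Option.some.injEq, List.isChain_singleton]
  grind

lemma IsCenteredAlternating.of_cons_append {p q : A × Fin k} {m : List (A × Fin k)}
    (hw : IsCenteredAlternating φ S (p :: (m ++ [q]))) : IsCenteredAlternating φ S m :=
  ⟨fun r hr => hw.1 r (by simp [hr]),
    (List.isChain_append.mp (by simpa using hw.2.tail)).1⟩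

lemma alternating_iff_isChain (w : List (A × Fin k)) :
    Alternating (fun m : Fin w.length => w[(m : ℕ)].2) ↔ (w.map Prod.snd).IsChain (· ≠ ·) := by
  simp [Alternating, List.isChain_iff_getElem]

lemma forall_eq_rev_iff_reverse_eq (w : List (A × Fin k)) :
    (∀ m : Fin w.length, w[(m : ℕ)].2 = w[(m.rev : ℕ)].2) ↔
      (w.map Prod.snd).reverse = w.map Prod.snd := by
  rw [List.ext_getElem_iff]
  simp only [List.length_reverse, List.length_map, List.getElem_reverse, List.getElem_map,
    true_and]
  constructor
  · intro h j hj _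
    convert (h ⟨j, hj⟩).symm using 3
    simp only [Fin.val_rev]
    omega
  · intro h m
    convert (h m m.isLt (by simp)).symm using 3
    simp only [Fin.val_rev]
    omega

end Alternating

section Words

variable {A : Type*} [Monoid A] {k : ℕ}

def wordProd (w : List (A × Fin k)) : A := (w.map Prod.fst).prod

@[simp] lemma wordProd_nil : wordProd ([] : List (A × Fin k)) = 1 := rfl

@[simp] lemma wordProd_cons (p : A × Fin k) (w : List (A × Fin k)) :
    wordProd (p :: w) = p.1 * wordProd w := by
  simp [wordProd]

@[simp] lemma wordProd_append (v w : List (A × Fin k)) :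
    wordProd (v ++ w) = wordProd v * wordProd w := by
  simp [wordProd]

end Words

section Freeness

variable {A : Type*} [Ring A] {k : ℕ} {φ φ' : A → ℂ} {S : Fin k → Set A}

theorem InfFreeSets.freeSets (h : InfFreeSets φ φ' S) : FreeSets φ S :=
  fun n hn i hi a ha ha0 => (h n hn i hi a ha ha0).1

theorem FreeSets.map_wordProd_eq_zero (h : FreeSets φ S) {w : List (A × Fin k)}
    (hw : IsCenteredAlternating φ S w) (hne : w ≠ []) : φ (wordProd w) = 0 := by
  have := h w.length (List.length_pos_iff.mpr hne) (fun m => w[(m : ℕ)].2)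
    ((alternating_iff_isChain w).mpr hw.2) (fun m => w[(m : ℕ)].1)
    (fun m => (hw.1 _ (List.getElem_mem _)).1) (fun m => (hw.1 _ (List.getElem_mem _)).2)
  simpa [List.ofFn_getElem_eq_map, wordProd] using this

theorem InfFreeSets.map_wordProd_eq (h : InfFreeSets φ φ' S) {w : List (A × Fin k)}
    (hw : IsCenteredAlternating φ S w) (hne : w ≠ []) :
    (IsOddPalindrome (w.map Prod.snd) → φ' (wordProd w) =
      (∏ j ∈ Finset.range ((w.length - 1) / 2),
        φ ((w.map Prod.fst).getD j 0 * (w.map Prod.fst).getD (w.length - 1 - j) 0)) *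
        φ' ((w.map Prod.fst).getD (w.length / 2) 0)) ∧
    (¬ IsOddPalindrome (w.map Prod.snd) → φ' (wordProd w) = 0) := by
  obtain ⟨-, hsym, hasym⟩ := h w.length (List.length_pos_iff.mpr hne) (fun m => w[(m : ℕ)].2)
    ((alternating_iff_isChain w).mpr hw.2) (fun m => w[(m : ℕ)].1)
    (fun m => (hw.1 _ (List.getElem_mem _)).1) (fun m => (hw.1 _ (List.getElem_mem _)).2)
  have hiff : (Odd w.length ∧ ∀ m : Fin w.length, w[(m : ℕ)].2 = w[(m.rev : ℕ)].2) ↔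
      IsOddPalindrome (w.map Prod.snd) := by
    rw [forall_eq_rev_iff_reverse_eq, IsOddPalindrome, List.length_map]
  rw [hiff, List.ofFn_getElem_eq_map] at hsym hasym
  refine ⟨fun hs => (hsym hs).trans ?_, hasym⟩
  have hlen := List.length_pos_iff.mpr hne
  rw [← Fin.prod_univ_eq_prod_range]
  congr 1
  · refine Finset.prod_congr rfl fun j _ => ?_
    have := j.isLt
    rw [List.getD_eq_getElem _ _ (by simp; omega), List.getD_eq_getElem _ _ (by simp; omega)]
    simp
  · rw [List.getD_eq_getElem _ _ (by simp; omega)]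
    simp

theorem InfFreeSets.map_wordProd_eq_zero (h : InfFreeSets φ φ' S) {w : List (A × Fin k)}
    (hw : IsCenteredAlternating φ S w) (hne : w ≠ [])
    (hs : ¬ IsOddPalindrome (w.map Prod.snd)) : φ' (wordProd w) = 0 :=
  (h.map_wordProd_eq hw hne).2 hs

theorem InfFreeSets.map_wordProd_eq_zero_of_head_ne_getLast (h : InfFreeSets φ φ' S)
    {w : List (A × Fin k)} (hw : IsCenteredAlternating φ S w) (hne : w ≠ [])
    (hind : (w.head hne).2 ≠ (w.getLast hne).2) : φ' (wordProd w) = 0 := by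
  refine h.map_wordProd_eq_zero hw hne fun hs => hind ?_
  have := congrArg List.head? hs.2
  rw [List.head?_reverse, List.getLast?_map, List.head?_map, List.head?_eq_some_head hne,
    List.getLast?_eq_some_getLast hne] at this
  simpa using this.symm

theorem InfFreeSets.map_wordProd_cons_append_of_isOddPalindrome (h : InfFreeSets φ φ' S)
    {p q : A × Fin k} {m : List (A × Fin k)}
    (hw : IsCenteredAlternating φ S (p :: (m ++ [q])))
    (hs : IsOddPalindrome ((p :: (m ++ [q])).map Prod.snd)) :
    φ' (wordProd (p :: (m ++ [q]))) = φ (p.1 * q.1) * φ' (wordProd m) := by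
  have hm : IsOddPalindrome (m.map Prod.snd) := by
    simp only [List.map_cons, List.map_append] at hs
    exact (isOddPalindrome_cons_append_iff.mp hs).2
  have hne : m ≠ [] := by
    rintro rfl
    simp [IsOddPalindrome] at hm
  obtain ⟨r, hr⟩ := hm.1
  rw [List.length_map] at hr
  rw [(h.map_wordProd_eq hw (by simp)).1 hs, (h.map_wordProd_eq hw.of_cons_append hne).1 hm,
    show ((p :: (m ++ [q])).length - 1) / 2 = r + 1 by simp; omega,
    show (m.length - 1) / 2 = r by omega, Finset.prod_range_succ', mul_right_comm, mul_comm]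
  have hget : ∀ j < m.length,
      (p.1 :: ((m.map Prod.fst) ++ [q.1])).getD (j + 1) 0 = (m.map Prod.fst).getD j 0 :=
    fun j hj => by rw [List.getD_cons_succ, List.getD_append _ _ _ _ (by simpa)]
  simp only [List.map_cons, List.map_append, List.map_nil, List.length_cons,
    List.length_append, List.length_nil, zero_add, List.getD_cons_zero]
  congr 2
  · rw [show m.length + 1 + 1 - 1 - 0 = m.length + 1 by omega, List.getD_cons_succ,
      List.getD_append_right _ _ _ _ (by simp)]
    simp
  · refine Finset.prod_congr rfl fun j hj => ?_
    rw [Finset.mem_range] at hj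
    rw [hget j (by omega), show m.length + 1 + 1 - 1 - (j + 1) = (m.length - 1 - j) + 1 by omega,
      hget _ (by omega)]
  · rw [show (m.length + 1 + 1) / 2 = m.length / 2 + 1 by omega, hget _ (by omega)]

theorem InfFreeSets.map_wordProd_cons_append (h : InfFreeSets φ φ' S)
    {p q : A × Fin k} {m : List (A × Fin k)}
    (hw : IsCenteredAlternating φ S (p :: (m ++ [q]))) (hpq : p.2 = q.2) (hm : m ≠ []) :
    φ' (wordProd (p :: (m ++ [q]))) = φ (p.1 * q.1) * φ' (wordProd m) := by
  by_cases hs : IsOddPalindrome ((p :: (m ++ [q])).map Prod.snd)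
  · exact h.map_wordProd_cons_append_of_isOddPalindrome hw hs
  · have hms : ¬ IsOddPalindrome (m.map Prod.snd) := fun hms =>
      hs (by simpa [isOddPalindrome_cons_append_iff, hpq] using hms)
    rw [h.map_wordProd_eq_zero hw (by simp) hs, h.map_wordProd_eq_zero hw.of_cons_append hm hms,
      mul_zero]

end Freeness

section Centering

variable {A : Type*} [Ring A] [Algebra ℂ A] {k : ℕ} {φ : A →ₗ[ℂ] ℂ}
  {Alg : Fin k → Subalgebra ℂ A} {i : Fin k}

def centered (φ : A →ₗ[ℂ] ℂ) (a : A) : A := a - φ a • 1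

lemma centered_add_smul_one (φ : A →ₗ[ℂ] ℂ) (a : A) : centered φ a + φ a • 1 = a :=
  sub_add_cancel a _

lemma map_centered (hφ1 : φ 1 = 1) (a : A) : φ (centered φ a) = 0 := by
  simp [centered, hφ1]

lemma centered_mem {S : Subalgebra ℂ A} {a : A} (ha : a ∈ S) : centered φ a ∈ S :=
  sub_mem ha (S.smul_mem S.one_mem _)

lemma wordProd_cons_eq_centered (φ : A →ₗ[ℂ] ℂ) (a : A) (i : Fin k) (w : List (A × Fin k)) :
    wordProd ((a, i) :: w) = wordProd ((centered φ a, i) :: w) + φ a • wordProd w := by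
  simp [centered, sub_mul]

lemma wordProd_append_eq_centered (φ : A →ₗ[ℂ] ℂ) (a : A) (i : Fin k) (w : List (A × Fin k)) :
    wordProd (w ++ [(a, i)]) = wordProd (w ++ [(centered φ a, i)]) + φ a • wordProd w := by
  simp [centered, mul_sub]

lemma map_mul_wordProd_cons (φ ψ : A →ₗ[ℂ] ℂ) (x : A) (p : A × Fin k) (t : List (A × Fin k))
    (i : Fin k) : ψ (x * wordProd (p :: t)) =
      ψ (wordProd ((centered φ (x * p.1), i) :: t)) + φ (x * p.1) * ψ (wordProd t) := by
  rw [show x * wordProd (p :: t) = wordProd ((x * p.1, i) :: t) by simp [mul_assoc],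
    wordProd_cons_eq_centered φ, map_add, map_smul, smul_eq_mul]

lemma map_wordProd_append_mul (φ ψ : A →ₗ[ℂ] ℂ) (x : A) (p : A × Fin k) (t : List (A × Fin k))
    (i : Fin k) : ψ (wordProd (t ++ [p]) * x) =
      ψ (wordProd (t ++ [(centered φ (p.1 * x), i)])) + φ (p.1 * x) * ψ (wordProd t) := by
  rw [show wordProd (t ++ [p]) * x = wordProd (t ++ [(p.1 * x, i)]) by simp [mul_assoc],
    wordProd_append_eq_centered φ, map_add, map_smul, smul_eq_mul]

lemma isCenteredAlternating_cons_centered (hφ1 : φ 1 = 1) {a : A} {t : List (A × Fin k)}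
    (ha : a ∈ Alg i) (hi : ∀ q ∈ t.head?, i ≠ q.2)
    (ht : IsCenteredAlternating φ (fun i => (Alg i : Set A)) t) :
    IsCenteredAlternating φ (fun i => (Alg i : Set A)) ((centered φ a, i) :: t) :=
  isCenteredAlternating_cons_iff.mpr ⟨⟨centered_mem ha, map_centered hφ1 a⟩, hi, ht⟩

lemma isCenteredAlternating_append_centered (hφ1 : φ 1 = 1) {a : A} {t : List (A × Fin k)}
    (ha : a ∈ Alg i) (hi : ∀ q ∈ t.getLast?, q.2 ≠ i)
    (ht : IsCenteredAlternating φ (fun i => (Alg i : Set A)) t) :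
    IsCenteredAlternating φ (fun i => (Alg i : Set A)) (t ++ [(centered φ a, i)]) :=
  isCenteredAlternating_append_singleton_iff.mpr ⟨ht, hi, centered_mem ha, map_centered hφ1 a⟩

end Centering

section Span

variable {A : Type*} [Ring A] [Algebra ℂ A] {k : ℕ} {φ : A →ₗ[ℂ] ℂ}
  {Alg : Fin k → Subalgebra ℂ A} {i : Fin k}

def centeredAlternatingSpan (φ : A →ₗ[ℂ] ℂ) (Alg : Fin k → Subalgebra ℂ A) : Submodule ℂ A :=
  Submodule.span ℂ
    {a | ∃ w, IsCenteredAlternating φ (fun i => (Alg i : Set A)) w ∧ wordProd w = a}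

lemma wordProd_cons_mem_centeredAlternatingSpan (hφ1 : φ 1 = 1) {a : A} {w : List (A × Fin k)}
    (ha : a ∈ Alg i) (hw : IsCenteredAlternating φ (fun i => (Alg i : Set A)) w)
    (hi : ∀ q ∈ w.head?, i ≠ q.2) :
    wordProd ((a, i) :: w) ∈ centeredAlternatingSpan φ Alg := by
  rw [wordProd_cons_eq_centered φ]
  exact add_mem
    (Submodule.subset_span ⟨_, isCenteredAlternating_cons_centered hφ1 ha hi hw, rfl⟩)
    (Submodule.smul_mem _ _ (Submodule.subset_span ⟨w, hw, rfl⟩))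

lemma mul_mem_centeredAlternatingSpan (hφ1 : φ 1 = 1) {a z : A} (ha : a ∈ Alg i)
    (hz : z ∈ centeredAlternatingSpan φ Alg) : a * z ∈ centeredAlternatingSpan φ Alg := by
  induction hz using Submodule.span_induction with
  | mem z hz =>
    obtain ⟨w, hw, rfl⟩ := hz
    rcases w with _ | ⟨q, t⟩
    · simpa using wordProd_cons_mem_centeredAlternatingSpan hφ1 ha hw (by simp)
    obtain ⟨⟨hq1, -⟩, hqt, ht⟩ := isCenteredAlternating_cons_iff.mp hw
    by_cases hq : q.2 = i
    · rw [show a * wordProd (q :: t) = wordProd ((a * q.1, i) :: t) by simp [mul_assoc]]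
      exact wordProd_cons_mem_centeredAlternatingSpan hφ1 (mul_mem ha (hq ▸ hq1)) ht (hq ▸ hqt)
    · rw [← wordProd_cons (a, i)]
      exact wordProd_cons_mem_centeredAlternatingSpan hφ1 ha hw (by simpa using Ne.symm hq)
  | zero => simp
  | add x y _ _ hx hy => rw [mul_add]; exact add_mem hx hy
  | smul c x _ hx => rw [mul_smul_comm]; exact Submodule.smul_mem _ c hx

lemma mem_centeredAlternatingSpan_of_mem_adjoin (hφ1 : φ 1 = 1) {z : A}
    (hz : z ∈ Algebra.adjoin ℂ (⋃ i, (Alg i : Set A))) : z ∈ centeredAlternatingSpan φ Alg := by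
  rw [← Subalgebra.mem_toSubmodule, Algebra.adjoin_eq_span] at hz
  refine Submodule.span_le.mpr (fun z hz => ?_) hz
  induction hz using Submonoid.closure_induction_left with
  | one => exact Submodule.subset_span ⟨[], by simp [IsCenteredAlternating], rfl⟩
  | mul_left x hx y _ hy =>
    obtain ⟨i, hi⟩ := Set.mem_iUnion.mp hx
    exact mul_mem_centeredAlternatingSpan hφ1 hi hy

theorem map_mul_comm_of_mem_centeredAlternatingSpan (hφ1 : φ 1 = 1) (ψ : A →ₗ[ℂ] ℂ)
    (hψ : ∀ i, ∀ x ∈ Alg i, φ x = 0 → ∀ w, IsCenteredAlternating φ (fun i => (Alg i : Set A)) w →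
      ψ (x * wordProd w) = ψ (wordProd w * x))
    {x z : A} (hx : x ∈ Alg i) (hz : z ∈ centeredAlternatingSpan φ Alg) :
    ψ (x * z) = ψ (z * x) := by
  induction hz using Submodule.span_induction with
  | mem z hz =>
    obtain ⟨w, hw, rfl⟩ := hz
    have hc := hψ i _ (centered_mem hx) (map_centered hφ1 x) w hw
    rw [← centered_add_smul_one φ x]
    simp only [add_mul, mul_add, smul_mul_assoc, mul_smul_comm, one_mul, mul_one, map_add,
      map_smul, hc]
  | zero => simp
  | add y z _ _ hy hz => simp only [mul_add, add_mul, map_add, hy, hz]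
  | smul c y _ hy => simp only [mul_smul_comm, smul_mul_assoc, map_smul, hy]

theorem map_mul_comm_of_mem_adjoin (hφ1 : φ 1 = 1) (ψ : A →ₗ[ℂ] ℂ)
    (hψ : ∀ i, ∀ x ∈ Alg i, φ x = 0 → ∀ w, IsCenteredAlternating φ (fun i => (Alg i : Set A)) w →
      ψ (x * wordProd w) = ψ (wordProd w * x))
    {x : A} (hx : x ∈ Algebra.adjoin ℂ (⋃ i, (Alg i : Set A))) :
    ∀ y ∈ Algebra.adjoin ℂ (⋃ i, (Alg i : Set A)), ψ (x * y) = ψ (y * x) := by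
  induction hx using Algebra.adjoin_induction with
  | mem x hx =>
    obtain ⟨i, hi⟩ := Set.mem_iUnion.mp hx
    exact fun y hy => map_mul_comm_of_mem_centeredAlternatingSpan hφ1 ψ hψ hi
      (mem_centeredAlternatingSpan_of_mem_adjoin hφ1 hy)
  | algebraMap r => exact fun y _ => by rw [Algebra.commutes]
  | add x₁ x₂ _ _ h₁ h₂ =>
    exact fun y hy => by simp only [add_mul, mul_add, map_add, h₁ y hy, h₂ y hy]
  | mul x₁ x₂ hx₁ hx₂ h₁ h₂ =>
    intro y hy
    calc ψ (x₁ * x₂ * y) = ψ (x₂ * y * x₁) := by rw [mul_assoc, h₁ _ (mul_mem hx₂ hy)]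
      _ = ψ (y * x₁ * x₂) := by rw [mul_assoc, h₂ _ (mul_mem hy hx₁)]
      _ = ψ (y * (x₁ * x₂)) := by rw [mul_assoc]

end Span

section Letter

variable {A : Type*} [Ring A] [Algebra ℂ A] {k : ℕ} {φ φ' : A →ₗ[ℂ] ℂ}
  {Alg : Fin k → Subalgebra ℂ A} {i : Fin k} {x : A}

theorem FreeSets.map_mul_wordProd_cons_eq_zero (hfree : FreeSets φ (fun i => (Alg i : Set A)))
    (hφ1 : φ 1 = 1) (hx : x ∈ Alg i) (hx0 : φ x = 0) {q : A × Fin k} {t : List (A × Fin k)}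
    (hw : IsCenteredAlternating φ (fun i => (Alg i : Set A)) (q :: t)) (h : q.2 = i → t ≠ []) :
    φ (x * wordProd (q :: t)) = 0 := by
  obtain ⟨⟨hq1, -⟩, hqt, ht⟩ := isCenteredAlternating_cons_iff.mp hw
  by_cases hq : q.2 = i
  · rw [map_mul_wordProd_cons φ φ x q t i, hfree.map_wordProd_eq_zero ht (h hq), mul_zero,
      add_zero]
    exact hfree.map_wordProd_eq_zero (isCenteredAlternating_cons_centered hφ1
      (mul_mem hx (hq ▸ hq1)) (hq ▸ hqt) ht) (by simp)
  · rw [← wordProd_cons (x, i)]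
    exact hfree.map_wordProd_eq_zero
      (isCenteredAlternating_cons_iff.mpr ⟨⟨hx, hx0⟩, by simpa using Ne.symm hq, hw⟩) (by simp)

theorem FreeSets.map_wordProd_append_mul_eq_zero (hfree : FreeSets φ (fun i => (Alg i : Set A)))
    (hφ1 : φ 1 = 1) (hx : x ∈ Alg i) (hx0 : φ x = 0) {q : A × Fin k} {t : List (A × Fin k)}
    (hw : IsCenteredAlternating φ (fun i => (Alg i : Set A)) (t ++ [q])) (h : q.2 = i → t ≠ []) :
    φ (wordProd (t ++ [q]) * x) = 0 := by
  obtain ⟨ht, hqt, hq1, -⟩ := isCenteredAlternating_append_singleton_iff.mp hw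
  by_cases hq : q.2 = i
  · rw [map_wordProd_append_mul φ φ x q t i, hfree.map_wordProd_eq_zero ht (h hq), mul_zero,
      add_zero]
    exact hfree.map_wordProd_eq_zero (isCenteredAlternating_append_centered hφ1
      (mul_mem (hq ▸ hq1) hx) (hq ▸ hqt) ht) (by simp)
  · rw [show wordProd (t ++ [q]) * x = wordProd ((t ++ [q]) ++ [(x, i)]) by simp [mul_assoc]]
    exact hfree.map_wordProd_eq_zero
      (isCenteredAlternating_append_singleton_iff.mpr ⟨hw, by simpa using hq, hx, hx0⟩) (by simp)

theorem FreeSets.map_mul_wordProd_comm (hfree : FreeSets φ (fun i => (Alg i : Set A)))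
    (hφ1 : φ 1 = 1) (htrace : ∀ a ∈ Alg i, ∀ b ∈ Alg i, φ (a * b) = φ (b * a))
    (hx : x ∈ Alg i) (hx0 : φ x = 0) {w : List (A × Fin k)}
    (hw : IsCenteredAlternating φ (fun i => (Alg i : Set A)) w) :
    φ (x * wordProd w) = φ (wordProd w * x) := by
  rcases w with _ | ⟨q, t⟩
  · simp
  by_cases hsingle : t = [] ∧ q.2 = i
  · obtain ⟨rfl, hq⟩ := hsingle
    simpa using htrace x hx q.1 (hq ▸ (hw.1 q (by simp)).1)
  obtain ⟨t', g, hg⟩ : ∃ t' g, q :: t = t' ++ [g] :=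
    ⟨_, _, (List.dropLast_append_getLast (List.cons_ne_nil q t)).symm⟩
  rw [hfree.map_mul_wordProd_cons_eq_zero hφ1 hx hx0 hw (fun hq ht => hsingle ⟨ht, hq⟩), hg,
    hfree.map_wordProd_append_mul_eq_zero hφ1 hx hx0 (hg ▸ hw)]
  rintro hgi rfl
  simp only [List.nil_append, List.cons.injEq] at hg
  exact hsingle ⟨hg.2, hg.1 ▸ hgi⟩

theorem InfFreeSets.map_mul_wordProd_comm_of_ne_of_ne
    (hfree : InfFreeSets φ φ' (fun i => (Alg i : Set A))) {w : List (A × Fin k)}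
    (hw₁ : IsCenteredAlternating φ (fun i => (Alg i : Set A)) ((x, i) :: w))
    (hw₂ : IsCenteredAlternating φ (fun i => (Alg i : Set A)) (w ++ [(x, i)])) (hne : w ≠ []) :
    φ' (x * wordProd w) = φ' (wordProd w * x) := by
  have hhead := (isCenteredAlternating_cons_iff.mp hw₁).2.1 _ (List.head?_eq_some_head hne)
  have hlast := (isCenteredAlternating_append_singleton_iff.mp hw₂).2.1 _
    (List.getLast?_eq_some_getLast hne)
  rw [← wordProd_cons (x, i), show wordProd w * x = wordProd (w ++ [(x, i)]) by simp,
    hfree.map_wordProd_eq_zero_of_head_ne_getLast hw₁ (by simp)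
      (by simpa [List.getLast_cons hne] using hlast.symm),
    hfree.map_wordProd_eq_zero_of_head_ne_getLast hw₂ (by simp)
      (by simpa [List.head_append_of_ne_nil hne] using hhead.symm)]

theorem InfFreeSets.map_mul_wordProd_comm_of_head_eq
    (hfree : InfFreeSets φ φ' (fun i => (Alg i : Set A))) (hφ1 : φ 1 = 1)
    (htrace : ∀ a ∈ Alg i, ∀ b ∈ Alg i, φ (a * b) = φ (b * a)) (hx : x ∈ Alg i)
    {f : A × Fin k} {t : List (A × Fin k)} (hf : f.2 = i) (ht : t ≠ [])
    (hw : IsCenteredAlternating φ (fun i => (Alg i : Set A)) (f :: t ++ [(x, i)])) :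
    φ' (x * wordProd (f :: t)) = φ' (wordProd (f :: t) * x) := by
  obtain ⟨hft, hlast, -⟩ := isCenteredAlternating_append_singleton_iff.mp hw
  obtain ⟨⟨hf1, -⟩, hhead, htw⟩ := isCenteredAlternating_cons_iff.mp hft
  have hlast' : (t.getLast ht).2 ≠ i :=
    hlast _ (by simp [List.getLast?_cons, List.getLast?_eq_some_getLast ht])
  have hleft : φ' (x * wordProd (f :: t)) = φ (x * f.1) * φ' (wordProd t) := by
    rw [map_mul_wordProd_cons φ φ' x f t i, hfree.map_wordProd_eq_zero_of_head_ne_getLast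
        (isCenteredAlternating_cons_centered hφ1 (mul_mem hx (hf ▸ hf1)) (hf ▸ hhead) htw)
        (by simp) (by simpa [List.getLast_cons ht] using hlast'.symm), zero_add]
  have hright : φ' (wordProd (f :: t) * x) = φ (f.1 * x) * φ' (wordProd t) := by
    rw [show wordProd (f :: t) * x = wordProd (f :: (t ++ [(x, i)])) by simp [mul_assoc]]
    exact hfree.map_wordProd_cons_append hw hf ht
  rw [hleft, hright, htrace x hx f.1 (hf ▸ hf1)]

theorem InfFreeSets.map_mul_wordProd_comm_of_getLast_eq
    (hfree : InfFreeSets φ φ' (fun i => (Alg i : Set A))) (hφ1 : φ 1 = 1)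
    (htrace : ∀ a ∈ Alg i, ∀ b ∈ Alg i, φ (a * b) = φ (b * a)) (hx : x ∈ Alg i)
    {g : A × Fin k} {t : List (A × Fin k)} (hg : g.2 = i) (ht : t ≠ [])
    (hw : IsCenteredAlternating φ (fun i => (Alg i : Set A)) ((x, i) :: (t ++ [g]))) :
    φ' (x * wordProd (t ++ [g])) = φ' (wordProd (t ++ [g]) * x) := by
  obtain ⟨-, hhead, htg⟩ := isCenteredAlternating_cons_iff.mp hw
  obtain ⟨htw, hlast, hg1, -⟩ := isCenteredAlternating_append_singleton_iff.mp htg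
  have hhead' : i ≠ (t.head ht).2 :=
    hhead _ (by simp [List.head?_append, List.head?_eq_some_head ht])
  have hright : φ' (wordProd (t ++ [g]) * x) = φ (g.1 * x) * φ' (wordProd t) := by
    rw [map_wordProd_append_mul φ φ' x g t i, hfree.map_wordProd_eq_zero_of_head_ne_getLast
        (isCenteredAlternating_append_centered hφ1 (mul_mem (hg ▸ hg1) hx) (hg ▸ hlast) htw)
        (by simp) (by simpa [List.head_append_of_ne_nil ht] using hhead'.symm), zero_add]
  have hleft : φ' (x * wordProd (t ++ [g])) = φ (x * g.1) * φ' (wordProd t) := by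
    rw [← wordProd_cons (x, i)]
    exact hfree.map_wordProd_cons_append hw hg.symm ht
  rw [hleft, hright, htrace x hx g.1 (hg ▸ hg1)]

theorem InfFreeSets.map_mul_wordProd_comm_of_head_eq_of_getLast_eq
    (hfree : InfFreeSets φ φ' (fun i => (Alg i : Set A))) (hφ1 : φ 1 = 1)
    (htrace : ∀ a ∈ Alg i, ∀ b ∈ Alg i, φ (a * b) = φ (b * a)) (hx : x ∈ Alg i)
    {f g : A × Fin k} {m : List (A × Fin k)} (hf : f.2 = i) (hg : g.2 = i)
    (hw : IsCenteredAlternating φ (fun i => (Alg i : Set A)) (f :: (m ++ [g]))) :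
    φ' (x * wordProd (f :: (m ++ [g]))) = φ' (wordProd (f :: (m ++ [g])) * x) := by
  obtain ⟨⟨hf1, hf0⟩, hhead, hmg⟩ := isCenteredAlternating_cons_iff.mp hw
  obtain ⟨hm, hlast, hg1, hg0⟩ := isCenteredAlternating_append_singleton_iff.mp hmg
  have hne : m ≠ [] := by
    rintro rfl
    exact hhead g rfl (hf.trans hg.symm)
  have hhead' : i ≠ (m.head hne).2 :=
    hf ▸ hhead _ (by simp [List.head?_append, List.head?_eq_some_head hne])
  have hlast' : (m.getLast hne).2 ≠ i := hg ▸ hlast _ (List.getLast?_eq_some_getLast hne)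
  have hfm : IsCenteredAlternating φ (fun i => (Alg i : Set A)) (f :: m) :=
    isCenteredAlternating_cons_iff.mpr
      ⟨⟨hf1, hf0⟩, by simpa [List.head?_eq_some_head hne, hf] using hhead', hm⟩
  have hleft : φ' (x * wordProd (f :: (m ++ [g]))) =
      φ (centered φ (x * f.1) * g.1) * φ' (wordProd m) := by
    rw [map_mul_wordProd_cons φ φ' x f _ i,
      hfree.map_wordProd_eq_zero_of_head_ne_getLast hmg (by simp)
        (by simpa [List.head_append_of_ne_nil hne, hg] using hhead'.symm), mul_zero, add_zero]
    exact hfree.map_wordProd_cons_append (isCenteredAlternating_cons_centered hφ1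
      (mul_mem hx (hf ▸ hf1)) (by simpa [hf] using hhead) hmg) hg.symm hne
  have hright : φ' (wordProd (f :: (m ++ [g])) * x) =
      φ (f.1 * centered φ (g.1 * x)) * φ' (wordProd m) := by
    rw [← List.cons_append, map_wordProd_append_mul φ φ' x g _ i,
      hfree.map_wordProd_eq_zero_of_head_ne_getLast hfm (by simp)
        (by simpa [List.getLast_cons hne, hf] using hlast'.symm), mul_zero, add_zero]
    exact hfree.map_wordProd_cons_append (isCenteredAlternating_append_centered hφ1
      (mul_mem (hg ▸ hg1) hx)
      (by simpa [List.getLast?_cons, List.getLast?_eq_some_getLast hne] using hlast') hfm) hf hne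
  have hpair : φ (centered φ (x * f.1) * g.1) = φ (f.1 * centered φ (g.1 * x)) := by
    simp only [centered, sub_mul, mul_sub, smul_mul_assoc, mul_smul_comm, one_mul, mul_one,
      map_sub, map_smul, hf0, hg0, smul_zero, sub_zero, ← mul_assoc]
    rw [mul_assoc, htrace x hx _ (mul_mem (hf ▸ hf1) (hg ▸ hg1))]
  rw [hleft, hright, hpair]

theorem InfFreeSets.map_mul_wordProd_comm
    (hfree : InfFreeSets φ φ' (fun i => (Alg i : Set A))) (hφ1 : φ 1 = 1)
    (htrace : ∀ a ∈ Alg i, ∀ b ∈ Alg i, φ (a * b) = φ (b * a))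
    (htrace' : ∀ a ∈ Alg i, ∀ b ∈ Alg i, φ' (a * b) = φ' (b * a))
    (hx : x ∈ Alg i) (hx0 : φ x = 0) {w : List (A × Fin k)}
    (hw : IsCenteredAlternating φ (fun i => (Alg i : Set A)) w) :
    φ' (x * wordProd w) = φ' (wordProd w * x) := by
  rcases w with _ | ⟨f, t⟩
  · simp
  have hx' : x ∈ (Alg i : Set A) ∧ φ x = 0 := ⟨hx, hx0⟩
  rcases List.eq_nil_or_concat' t with rfl | ⟨m, g, rfl⟩
  · by_cases hf : f.2 = i
    · simpa using htrace' x hx f.1 (hf ▸ (hw.1 f (by simp)).1)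
    · refine hfree.map_mul_wordProd_comm_of_ne_of_ne (i := i) ?_ ?_ (by simp)
      · exact isCenteredAlternating_cons_iff.mpr ⟨hx', by simpa using Ne.symm hf, hw⟩
      · exact isCenteredAlternating_append_singleton_iff.mpr ⟨hw, by simpa using hf, hx'⟩
  by_cases hf : f.2 = i <;> by_cases hg : g.2 = i
  · exact hfree.map_mul_wordProd_comm_of_head_eq_of_getLast_eq hφ1 htrace hx hf hg hw
  · exact hfree.map_mul_wordProd_comm_of_head_eq hφ1 htrace hx hf (by simp)
      (isCenteredAlternating_append_singleton_iff.mpr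
        ⟨hw, by simpa [List.getLast?_cons] using hg, hx'⟩)
  · exact hfree.map_mul_wordProd_comm_of_getLast_eq (t := f :: m) hφ1 htrace hx hg (by simp)
      (isCenteredAlternating_cons_iff.mpr ⟨hx', by simpa using Ne.symm hf, hw⟩)
  · refine hfree.map_mul_wordProd_comm_of_ne_of_ne (i := i) ?_ ?_ (by simp)
    · exact isCenteredAlternating_cons_iff.mpr ⟨hx', by simpa using Ne.symm hf, hw⟩
    · exact isCenteredAlternating_append_singleton_iff.mpr
        ⟨hw, by simpa [List.getLast?_cons] using hg, hx'⟩

end Letter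

theorem trace_on_generated_of_infinitesimallyFree_general
    {A : Type*} [Ring A] [Algebra ℂ A]
    (φ φ' : A →ₗ[ℂ] ℂ) (hφ1 : φ 1 = 1)
    {k : ℕ} (Alg : Fin k → Subalgebra ℂ A)
    (hfree : InfFreeSets (⇑φ) (⇑φ') (fun i => (Alg i : Set A)))
    (htrace : ∀ i : Fin k, ∀ a ∈ Alg i, ∀ b ∈ Alg i,
      φ (a * b) = φ (b * a) ∧ φ' (a * b) = φ' (b * a)) :
    ∀ x ∈ Algebra.adjoin ℂ (⋃ i, (Alg i : Set A)),
      ∀ y ∈ Algebra.adjoin ℂ (⋃ i, (Alg i : Set A)),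
        φ (x * y) = φ (y * x) ∧ φ' (x * y) = φ' (y * x) := by
  intro x hx y hy
  refine ⟨map_mul_comm_of_mem_adjoin hφ1 φ ?_ hx y hy,
    map_mul_comm_of_mem_adjoin hφ1 φ' ?_ hx y hy⟩
  · intro i a ha ha0 w hw
    exact hfree.freeSets.map_mul_wordProd_comm hφ1 (fun b hb c hc => (htrace i b hb c hc).1)
      ha ha0 hw
  · intro i a ha ha0 w hw
    exact hfree.map_mul_wordProd_comm hφ1 (fun b hb c hc => (htrace i b hb c hc).1)
      (fun b hb c hc => (htrace i b hb c hc).2) ha ha0 hw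

/-- If `A_1, …, A_k` are infinitesimally free and `φ, φ'` restrict
to traces on each `A_i`, then `φ` and `φ'` are traces on the unital subalgebra
generated by `A_1 ∪ ⋯ ∪ A_k`. -/
theorem trace_on_generated_of_infinitesimallyFree
    {A : Type*} [Ring A] [Algebra ℂ A]
    (φ φ' : A →ₗ[ℂ] ℂ) (hφ1 : φ 1 = 1) (hφ'1 : φ' 1 = 0)
    {k : ℕ} (Alg : Fin k → Subalgebra ℂ A)
    (hfree : InfFreeSets (⇑φ) (⇑φ') (fun i => (Alg i : Set A)))
    (htrace : ∀ i : Fin k, ∀ a ∈ Alg i, ∀ b ∈ Alg i,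
      φ (a * b) = φ (b * a) ∧ φ' (a * b) = φ' (b * a)) :
    ∀ x ∈ Algebra.adjoin ℂ (⋃ i, (Alg i : Set A)),
      ∀ y ∈ Algebra.adjoin ℂ (⋃ i, (Alg i : Set A)),
        φ (x * y) = φ (y * x) ∧ φ' (x * y) = φ' (y * x) :=
  trace_on_generated_of_infinitesimallyFree_general φ φ' hφ1 Alg hfree htrace

end InfFree
end
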